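/- Let E = {s_n} ⊂ K be a pseudo-convergent sequence with a pseudo-limit β ∈ K, and let V_E be the associated valuation ring of K(X), with valuation v_E. Then for α ∈ K, v_E(X - α) ≤ v_E(X - β), with equality if and only if α is a pseudo-limit of E. -/

import Mathlib

/-!
Write `γₙ = v(β - sₙ)`, a strictly increasing sequence. By the ultrametric equality
`v(α - sₙ) = min (v(α - β)) γₙ` for all `n` but at most one (the one with `γₙ = v(α - β)`).
So eventually `v(α - sₙ) ≤ γₙ`, which is `v_E(X - α) ≤ v_E(X - β)`; and `γₙ ≤ v(α - sₙ)` holds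
eventually iff `γₙ < v(α - β)` for every `n`, which is exactly when `α` is a pseudo-limit.
-/

open Filter
open scoped Polynomial

/-- Membership in V_E: φ(s_n) is defined and lies in V for all but finitely many n. -/
def memVE {K Γ : Type*} [Field K] [AddCommGroup Γ] [LinearOrder Γ] [IsOrderedAddMonoid Γ]
    (v : AddValuation K (WithTop Γ)) (s : ℕ → K) (φ : RatFunc K) : Prop :=
  ∀ᶠ n in atTop, (RatFunc.denom φ).eval (s n) ≠ 0 ∧
    0 ≤ v (RatFunc.eval (RingHom.id K) (s n) φ)

open LinearOrderedAddCommGroupWithTop in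
theorem AddValuation.map_div_nonneg_iff {K Γ₀ : Type*} [Field K]
    [LinearOrderedAddCommGroupWithTop Γ₀] (v : AddValuation K Γ₀) {x y : K} (hy : y ≠ 0) :
    0 ≤ v (x / y) ↔ v y ≤ v x := by
  rw [v.map_div, ← sub_self_eq_zero_of_ne_top (v.ne_top_iff.2 hy),
    sub_le_sub_iff_left_of_ne_top (v.ne_top_iff.2 hy)]

namespace RatFunc

variable {K : Type*} [Field K]

theorem X_sub_C_ne_zero (a : K) : X - C a ≠ 0 := by
  rw [← algebraMap_X, ← algebraMap_C, ← map_sub]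
  exact algebraMap_ne_zero (Polynomial.X_sub_C_ne_zero a)

theorem X_sub_C_div_X_sub_C_eq (a b : K) :
    (X - C a) / (X - C b) = algebraMap K[X] (RatFunc K) (Polynomial.X - Polynomial.C a) /
      algebraMap K[X] (RatFunc K) (Polynomial.X - Polynomial.C b) := by
  simp only [map_sub, algebraMap_X, algebraMap_C]

theorem gcd_X_sub_C_X_sub_C [DecidableEq K] {a b : K} (hab : a ≠ b) :
    gcd (Polynomial.X - Polynomial.C a) (Polynomial.X - Polynomial.C b) = 1 :=
  (normalize_gcd _ _).symm.trans <| normalize_eq_one.2 <| (gcd_isUnit_iff _ _).2 <|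
    Polynomial.isCoprime_X_sub_C_of_isUnit_sub (sub_ne_zero_of_ne hab).isUnit

theorem num_X_sub_C_div_X_sub_C {a b : K} (hab : a ≠ b) :
    num ((X - C a) / (X - C b)) = Polynomial.X - Polynomial.C a := by
  classical
  simp [X_sub_C_div_X_sub_C_eq, gcd_X_sub_C_X_sub_C hab,
    (Polynomial.monic_X_sub_C b).leadingCoeff]

theorem denom_X_sub_C_div_X_sub_C {a b : K} (hab : a ≠ b) :
    denom ((X - C a) / (X - C b)) = Polynomial.X - Polynomial.C b := by
  classical
  simp [X_sub_C_div_X_sub_C_eq, denom_div _ (Polynomial.X_sub_C_ne_zero b),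
    gcd_X_sub_C_X_sub_C hab, (Polynomial.monic_X_sub_C b).leadingCoeff]

theorem eval_X_sub_C_div_X_sub_C {a b : K} (hab : a ≠ b) (x : K) :
    eval (RingHom.id K) x ((X - C a) / (X - C b)) = (x - a) / (x - b) := by
  simp [eval, num_X_sub_C_div_X_sub_C hab, denom_X_sub_C_div_X_sub_C hab]

end RatFunc

section memVE

variable {K Γ : Type*} [Field K] [AddCommGroup Γ] [LinearOrder Γ] [IsOrderedAddMonoid Γ]
  (v : AddValuation K (WithTop Γ)) (s : ℕ → K)

theorem memVE_div_self (a : K) :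
    memVE v s ((RatFunc.X - RatFunc.C a) / (RatFunc.X - RatFunc.C a)) := by
  rw [div_self (RatFunc.X_sub_C_ne_zero a)]
  exact Eventually.of_forall fun n => by simp [RatFunc.eval]

theorem memVE_X_sub_C_div_X_sub_C_iff {a b : K} (hab : a ≠ b) :
    memVE v s ((RatFunc.X - RatFunc.C a) / (RatFunc.X - RatFunc.C b)) ↔
      ∀ᶠ n in atTop, s n ≠ b ∧ v (b - s n) ≤ v (a - s n) := by
  refine eventually_congr (Eventually.of_forall fun n => ?_)
  rw [RatFunc.denom_X_sub_C_div_X_sub_C hab, RatFunc.eval_X_sub_C_div_X_sub_C hab,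
    Polynomial.eval_sub, Polynomial.eval_X, Polynomial.eval_C, sub_ne_zero, v.map_sub_swap b,
    v.map_sub_swap a]
  exact and_congr_right fun hb => v.map_div_nonneg_iff (sub_ne_zero.2 hb)

end memVE

def IsPseudoLimit {R Γ₀ : Type*} [Ring R] [LinearOrderedAddCommMonoidWithTop Γ₀]
    (v : AddValuation R Γ₀) (s : ℕ → R) (β : R) : Prop :=
  ∀ n, v (β - s n) < v (β - s (n + 1))

namespace IsPseudoLimit

variable {R Γ₀ : Type*} [Ring R] [LinearOrderedAddCommMonoidWithTop Γ₀]
  {v : AddValuation R Γ₀} {s : ℕ → R} {β : R}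

theorem strictMono (h : IsPseudoLimit v s β) : StrictMono fun n => v (β - s n) :=
  strictMono_nat_of_lt_succ h

theorem val_sub_ne_top (h : IsPseudoLimit v s β) (n : ℕ) : v (β - s n) ≠ ⊤ :=
  (h n).ne_top

theorem apply_ne (h : IsPseudoLimit v s β) (n : ℕ) : s n ≠ β := fun hsn =>
  h.val_sub_ne_top n (by rw [hsn, sub_self, v.map_zero])

theorem eventually_val_sub_eq_min (h : IsPseudoLimit v s β) (α : R) :
    ∀ᶠ n in atTop, v (α - s n) = min (v (α - β)) (v (β - s n)) := by
  have hne : ∀ᶠ n in atTop, v (β - s n) ≠ v (α - β) := by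
    simpa only [Nat.cofinite_eq_atTop] using
      h.strictMono.injective.tendsto_cofinite.eventually (eventually_cofinite_ne (v (α - β)))
  filter_upwards [hne] with n hn
  rw [← sub_add_sub_cancel α β (s n)]
  exact v.map_add_of_distinct_val hn.symm

theorem isPseudoLimit_iff (h : IsPseudoLimit v s β) {α : R} :
    IsPseudoLimit v s α ↔ ∀ n, v (β - s n) < v (α - β) := by
  refine ⟨fun hα => ?_, fun hlt n => ?_⟩
  · by_contra! hN
    obtain ⟨N, hN⟩ := hN
    obtain ⟨M, hM⟩ := eventually_atTop.1
      ((h.eventually_val_sub_eq_min α).and (eventually_ge_atTop N))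
    have hconst : ∀ m ≥ M, v (α - s m) = v (α - β) := fun m hm =>
      (hM m hm).1.trans (min_eq_left (hN.trans (h.strictMono.monotone (hM m hm).2)))
    exact (hα M).ne ((hconst M le_rfl).trans (hconst (M + 1) M.le_succ).symm)
  · have hsum : ∀ m, v (α - s m) = v (β - s m) := fun m => by
      rw [← sub_add_sub_cancel α β (s m)]
      exact v.map_add_eq_of_lt_right (hlt m)
    rw [hsum, hsum]
    exact h n

theorem eventually_ne_and_val_sub_le (h : IsPseudoLimit v s β) (α : R) :
    ∀ᶠ n in atTop, s n ≠ α ∧ v (α - s n) ≤ v (β - s n) := by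
  filter_upwards [h.eventually_val_sub_eq_min α] with n hn
  have hle : v (α - s n) ≤ v (β - s n) := hn ▸ min_le_right _ _
  refine ⟨fun hsn => h.val_sub_ne_top n (top_le_iff.1 ?_), hle⟩
  simpa [hsn] using hle

theorem eventually_val_sub_le_iff (h : IsPseudoLimit v s β) {α : R} :
    (∀ᶠ n in atTop, v (β - s n) ≤ v (α - s n)) ↔ IsPseudoLimit v s α := by
  rw [h.isPseudoLimit_iff]
  refine ⟨fun hle n => ?_, fun hlt => ?_⟩
  · obtain ⟨m, ⟨hmin, hlem⟩, hnm⟩ :=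
      (((h.eventually_val_sub_eq_min α).and hle).and (eventually_gt_atTop n)).exists
    exact (h.strictMono hnm).trans_le (hlem.trans (hmin ▸ min_le_left _ _))
  · filter_upwards [h.eventually_val_sub_eq_min α] with n hn
    rw [hn, min_eq_right (hlt n).le]

end IsPseudoLimit

theorem stmt11_general {K Γ : Type*} [Field K] [AddCommGroup Γ] [LinearOrder Γ] [IsOrderedAddMonoid Γ]
    (v : AddValuation K (WithTop Γ)) (s : ℕ → K)
    (β : K) (hβ : ∀ n, v (β - s n) < v (β - s (n + 1))) (α : K) :
    memVE v s ((RatFunc.X - RatFunc.C β) / (RatFunc.X - RatFunc.C α)) ∧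
    (memVE v s ((RatFunc.X - RatFunc.C α) / (RatFunc.X - RatFunc.C β)) ↔
      ∀ n, v (α - s n) < v (α - s (n + 1))) := by
  replace hβ : IsPseudoLimit v s β := hβ
  rcases eq_or_ne α β with rfl | hαβ
  · exact ⟨memVE_div_self v s α, iff_of_true (memVE_div_self v s α) hβ⟩
  refine ⟨(memVE_X_sub_C_div_X_sub_C_iff v s hαβ.symm).2 (hβ.eventually_ne_and_val_sub_le α), ?_⟩
  rw [memVE_X_sub_C_div_X_sub_C_iff v s hαβ]
  refine Iff.trans ?_ hβ.eventually_val_sub_le_iff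
  exact eventually_congr (Eventually.of_forall fun n => and_iff_right (hβ.apply_ne n))

/-- If β ∈ K is a pseudo-limit of E, then v_E(X - α) ≤ v_E(X - β) for all α ∈ K
(i.e. (X-β)/(X-α) ∈ V_E), with equality (i.e. (X-α)/(X-β) ∈ V_E as well)
if and only if α is a pseudo-limit of E. -/
theorem stmt11 {K Γ : Type*} [Field K] [AddCommGroup Γ] [LinearOrder Γ] [IsOrderedAddMonoid Γ]
    (v : AddValuation K (WithTop Γ)) (s : ℕ → K)
    (hE : ∀ n, v (s (n + 1) - s n) < v (s (n + 2) - s (n + 1)))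
    (β : K) (hβ : ∀ n, v (β - s n) < v (β - s (n + 1))) (α : K) :
    memVE v s ((RatFunc.X - RatFunc.C β) / (RatFunc.X - RatFunc.C α)) ∧
    (memVE v s ((RatFunc.X - RatFunc.C α) / (RatFunc.X - RatFunc.C β)) ↔
      ∀ n, v (α - s n) < v (α - s (n + 1))) :=
  stmt11_general v s β hβ α
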